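/- arXiv:2101.10748 — 2 statements merged into one kernel-verified Lean document; each statement's English description precedes it below -/
import Mathlib

section
/- Time-shift insensitivity of the stationary tail: under (HP1)–(HP3), sup over t > T_n of | ℙ_{π_n}(τ_{x_n} > t − T_n) / ℙ_{π_n}(τ_{x_n} > t) − 1 | → 0 as n → ∞. -/
open Finset Filter

/-- The kernel of the chain killed at `x`: all entries from or to `x` are set to zero.
For `y, z ≠ x` the powers of `killed P x` agree with the powers of the principal
submatrix `[P]_x` of `P` obtained by deleting the row and the column indexed by `x`. -/
def killed {n : ℕ} (P : Matrix (Fin n) (Fin n) ℝ) (x : Fin n) :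
    Matrix (Fin n) (Fin n) ℝ :=
  Matrix.of fun y z => if y = x ∨ z = x then 0 else P y z

/-- The no-hit probability `ℙ_α(τ_x > t) = Σ_{y ≠ x} Σ_{z ≠ x} α(y)·([P]_x)^t(y,z)`. -/
def noHit {n : ℕ} (P : Matrix (Fin n) (Fin n) ℝ) (x : Fin n)
    (a : Fin n → ℝ) (t : ℕ) : ℝ :=
  ∑ y ∈ Finset.univ.erase x, ∑ z ∈ Finset.univ.erase x, a y * ((killed P x) ^ t) y z

/-- The expected number of returns to `x` within time `T`:
`R_T(x) = Σ_{t=0}^{T} P^t(x,x)`. -/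
def returns {n : ℕ} (P : Matrix (Fin n) (Fin n) ℝ) (x : Fin n) (T : ℕ) : ℝ :=
  ∑ t ∈ Finset.range (T + 1), (P ^ t) x x

/-!
Write `S(t) = ℙ_π(τ_x > t)`. The tail loses the first-hitting mass `ℙ_π(τ_x = t + 1)` at each
step. This mass is at most `π(x)` by stationarity and, as the last `T` steps before the hit form
a `T`-step transition into `x`, at most `p · S(t + 1 - T)` with `p = max_v P^T(v, x)`.
By (HP1) and (HP3) `p ≤ 2π(x)`, so `Tp → 0` by (HP2). For `t ≤ T` the first bound keeps
`S(t) ≥ 1/2`; beyond, a strong induction comparing the loss over a block of length `T` with `S`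
one block earlier gives `(1 - 2Tp) S(t) ≤ S(t + T) ≤ S(t)`.
-/

open Matrix

namespace Matrix

variable {l m o R : Type*} [Fintype m] [Semiring R] [PartialOrder R] [IsOrderedRing R]

lemma mul_apply_le_mul_apply {A A' : Matrix l m R} {B B' : Matrix m o R}
    (hA : ∀ i j, 0 ≤ A i j) (hB : ∀ i j, 0 ≤ B i j)
    (hAA' : ∀ i j, A i j ≤ A' i j) (hBB' : ∀ i j, B i j ≤ B' i j) (i : l) (k : o) :
    (A * B) i k ≤ (A' * B') i k :=
  sum_le_sum fun j _ => mul_le_mul (hAA' i j) (hBB' j k) (hB j k) ((hA i j).trans (hAA' i j))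

lemma pow_apply_le_pow_apply [DecidableEq m] {A B : Matrix m m R} (hA : ∀ i j, 0 ≤ A i j)
    (hAB : ∀ i j, A i j ≤ B i j) (k : ℕ) (i j : m) : (A ^ k) i j ≤ (B ^ k) i j := by
  induction k generalizing i j with
  | zero => exact le_rfl
  | succ k ih =>
    rw [pow_succ, pow_succ]
    exact mul_apply_le_mul_apply (pow_apply_nonneg hA k) hA ih hAB i j

end Matrix

structure IsStationaryDistribution {ι : Type*} [Fintype ι] (P : Matrix ι ι ℝ) (pi : ι → ℝ) :
    Prop where
  nonneg : ∀ y, 0 ≤ pi y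
  sum_eq_one : ∑ y, pi y = 1
  vecMul_eq : pi ᵥ* P = pi

namespace IsStationaryDistribution

variable {ι : Type*} [Fintype ι] [DecidableEq ι] {P : Matrix ι ι ℝ} {pi : ι → ℝ}

lemma vecMul_pow (h : IsStationaryDistribution P pi) (k : ℕ) : pi ᵥ* P ^ k = pi := by
  induction k with
  | zero => rw [pow_zero, vecMul_one]
  | succ k ih => rw [pow_succ, ← vecMul_vecMul, ih, h.vecMul_eq]

lemma le_of_pow_apply_le (h : IsStationaryDistribution P pi) {k : ℕ} {x : ι} {p : ℝ}
    (hp : ∀ v, (P ^ k) v x ≤ p) : pi x ≤ p :=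
  calc pi x = ∑ v, pi v * (P ^ k) v x := (congrFun (h.vecMul_pow k) x).symm
    _ ≤ ∑ v, pi v * p := sum_le_sum fun v _ => mul_le_mul_of_nonneg_left (hp v) (h.nonneg v)
    _ = p := by rw [← sum_mul, h.sum_eq_one, one_mul]

end IsStationaryDistribution

section Killed

variable {n : ℕ} {P : Matrix (Fin n) (Fin n) ℝ} {x : Fin n}

lemma killed_nonneg (hP : ∀ y z, 0 ≤ P y z) (y z : Fin n) : 0 ≤ killed P x y z := by
  simp only [killed, of_apply]
  split_ifs
  exacts [le_rfl, hP y z]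

lemma killed_le (hP : ∀ y z, 0 ≤ P y z) (y z : Fin n) : killed P x y z ≤ P y z := by
  simp only [killed, of_apply]
  split_ifs
  exacts [hP y z, le_rfl]

lemma killed_pow_apply_self (t : ℕ) {y : Fin n} (hy : y ≠ x) : (killed P x ^ t) y x = 0 := by
  cases t with
  | zero => exact one_apply_ne hy
  | succ t =>
    rw [pow_succ, mul_apply]
    exact sum_eq_zero fun w _ => by simp [killed]

lemma killed_pow_mul_apply_le (hP : ∀ y z, 0 ≤ P y z) (t : ℕ) (y z : Fin n) :
    (killed P x ^ t * P) y z ≤ (P ^ (t + 1)) y z := by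
  rw [pow_succ]
  exact mul_apply_le_mul_apply (pow_apply_nonneg (killed_nonneg hP) t) hP
    (pow_apply_le_pow_apply (killed_nonneg hP) (killed_le hP) t) (fun _ _ => le_rfl) y z

lemma killed_mulVec_one (hP : P *ᵥ 1 = 1) {w : Fin n} (hw : w ≠ x) :
    (killed P x *ᵥ 1) w = 1 - P w x := by
  have hrow : ∑ z, P w z = 1 := by simpa [mulVec, dotProduct] using congrFun hP w
  rw [← hrow, ← sum_erase_eq_sub (mem_univ x)]
  simp only [mulVec, dotProduct, Pi.one_apply, mul_one]
  rw [← sum_erase univ (f := killed P x w) (a := x) (by simp [killed])]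
  exact sum_congr rfl fun z hz => by simp [killed, hw, ne_of_mem_erase hz]

lemma killed_pow_succ_mulVec_one (hP : P *ᵥ 1 = 1) (t : ℕ) {y : Fin n} (hy : y ≠ x) :
    (killed P x ^ (t + 1) *ᵥ 1) y = (killed P x ^ t *ᵥ 1) y - (killed P x ^ t * P) y x := by
  have hterm : ∀ w, (killed P x ^ t) y w * (killed P x *ᵥ 1) w
      = (killed P x ^ t) y w * (1 - P w x) := by
    intro w
    rcases eq_or_ne w x with rfl | hw
    · rw [killed_pow_apply_self t hy, zero_mul, zero_mul]
    · rw [killed_mulVec_one hP hw]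
  calc (killed P x ^ (t + 1) *ᵥ 1) y = ∑ w, (killed P x ^ t) y w * (killed P x *ᵥ 1) w := by
        rw [pow_succ, ← mulVec_mulVec]; rfl
    _ = ∑ w, (killed P x ^ t) y w * (1 - P w x) := sum_congr rfl fun w _ => hterm w
    _ = _ := by simp [mulVec, dotProduct, mul_apply, mul_sub]

end Killed

section NoHit

variable {n : ℕ} {P : Matrix (Fin n) (Fin n) ℝ} {x : Fin n}

lemma noHit_eq_sum_mulVec_one (a : Fin n → ℝ) (t : ℕ) :
    noHit P x a t = ∑ y ∈ univ.erase x, a y * (killed P x ^ t *ᵥ 1) y := by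
  refine sum_congr rfl fun y hy => ?_
  rw [← mul_sum]
  simp only [mulVec, dotProduct, Pi.one_apply, mul_one]
  exact congrArg _ (sum_erase univ (killed_pow_apply_self t (ne_of_mem_erase hy)))

/-- `firstHit P x a t = ℙ_a(X₀ ≠ x, τ_x = t + 1)`. -/
def firstHit (P : Matrix (Fin n) (Fin n) ℝ) (x : Fin n) (a : Fin n → ℝ) (t : ℕ) : ℝ :=
  ∑ y ∈ univ.erase x, a y * (killed P x ^ t * P) y x

variable {a : Fin n → ℝ}

lemma noHit_succ (hP : P *ᵥ 1 = 1) (t : ℕ) :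
    noHit P x a (t + 1) = noHit P x a t - firstHit P x a t := by
  simp only [noHit_eq_sum_mulVec_one, firstHit, ← sum_sub_distrib, ← mul_sub]
  exact sum_congr rfl fun y hy => by rw [killed_pow_succ_mulVec_one hP t (ne_of_mem_erase hy)]

lemma noHit_zero (ha : ∑ y, a y = 1) : noHit P x a 0 = 1 - a x := by
  simp [noHit_eq_sum_mulVec_one, sum_erase_eq_sub, ha]

lemma noHit_sub_noHit_add (hP : P *ᵥ 1 = 1) (s m : ℕ) :
    noHit P x a s - noHit P x a (s + m) = ∑ j ∈ range m, firstHit P x a (s + j) := by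
  induction m with
  | zero => simp
  | succ m ih => rw [sum_range_succ, ← ih, ← add_assoc, noHit_succ hP]; ring

lemma noHit_nonneg (hP : ∀ y z, 0 ≤ P y z) (ha : ∀ y, 0 ≤ a y) (t : ℕ) : 0 ≤ noHit P x a t :=
  sum_nonneg fun y _ => sum_nonneg fun z _ =>
    mul_nonneg (ha y) (pow_apply_nonneg (killed_nonneg hP) t y z)

lemma firstHit_nonneg (hP : ∀ y z, 0 ≤ P y z) (ha : ∀ y, 0 ≤ a y) (t : ℕ) :
    0 ≤ firstHit P x a t :=
  sum_nonneg fun y _ => mul_nonneg (ha y) <| by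
    rw [mul_apply]
    exact sum_nonneg fun w _ => mul_nonneg (pow_apply_nonneg (killed_nonneg hP) t y w) (hP w x)

lemma noHit_antitone (hP : P ∈ rowStochastic ℝ (Fin n)) (ha : ∀ y, 0 ≤ a y) :
    Antitone (noHit P x a) :=
  antitone_nat_of_succ_le fun t => by
    rw [noHit_succ hP.2]
    linarith [firstHit_nonneg (x := x) hP.1 ha t]

lemma firstHit_add_le (hP : ∀ y z, 0 ≤ P y z) (ha : ∀ y, 0 ≤ a y) {b : ℕ} {p : ℝ}
    (hp : ∀ v, (P ^ (b + 1)) v x ≤ p) (s : ℕ) :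
    firstHit P x a (s + b) ≤ p * noHit P x a s := by
  have hK := killed_nonneg (x := x) hP
  have hentry (y : Fin n) : (killed P x ^ (s + b) * P) y x ≤ p * (killed P x ^ s *ᵥ 1) y :=
    calc (killed P x ^ (s + b) * P) y x
        = ∑ v, (killed P x ^ s) y v * (killed P x ^ b * P) v x := by
          rw [pow_add, Matrix.mul_assoc, mul_apply]
      _ ≤ ∑ v, (killed P x ^ s) y v * p := sum_le_sum fun v _ =>
          mul_le_mul_of_nonneg_left ((killed_pow_mul_apply_le hP b v x).trans (hp v))
            (pow_apply_nonneg hK s y v)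
      _ = p * (killed P x ^ s *ᵥ 1) y := by simp [mulVec, dotProduct, mul_sum, mul_comm]
  rw [noHit_eq_sum_mulVec_one, mul_sum]
  exact sum_le_sum fun y _ =>
    (mul_le_mul_of_nonneg_left (hentry y) (ha y)).trans_eq (mul_left_comm _ _ _)

lemma noHit_add_sub_noHit_add_le (hP : P ∈ rowStochastic ℝ (Fin n)) (ha : ∀ y, 0 ≤ a y)
    {T : ℕ} (hT : 0 < T) {p : ℝ} (hp : ∀ v, (P ^ T) v x ≤ p) (s : ℕ) :
    noHit P x a (s + T) - noHit P x a (s + T + T) ≤ T * p * noHit P x a s := by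
  have hp0 : 0 ≤ p := (pow_apply_nonneg hP.1 T x x).trans (hp x)
  obtain ⟨b, rfl⟩ := Nat.exists_eq_add_one_of_ne_zero hT.ne'
  rw [noHit_sub_noHit_add hP.2]
  calc ∑ j ∈ range (b + 1), firstHit P x a (s + (b + 1) + j)
      ≤ ∑ j ∈ range (b + 1), p * noHit P x a s := sum_le_sum fun j _ => by
        rw [show s + (b + 1) + j = s + j + 1 + b by ring]
        exact (firstHit_add_le hP.1 ha hp _).trans
          (mul_le_mul_of_nonneg_left (noHit_antitone hP ha (by omega)) hp0)
    _ = (b + 1 : ℕ) * p * noHit P x a s := by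
        rw [sum_const, card_range, nsmul_eq_mul, mul_assoc]

end NoHit

section Stationary

variable {n : ℕ} {P : Matrix (Fin n) (Fin n) ℝ} {x : Fin n} {pi : Fin n → ℝ}

lemma firstHit_le (hP : ∀ y z, 0 ≤ P y z) (hpi : IsStationaryDistribution P pi) (t : ℕ) :
    firstHit P x pi t ≤ pi x :=
  calc firstHit P x pi t ≤ ∑ y ∈ univ.erase x, pi y * (P ^ (t + 1)) y x :=
        sum_le_sum fun y _ =>
          mul_le_mul_of_nonneg_left (killed_pow_mul_apply_le hP t y x) (hpi.nonneg y)
    _ ≤ ∑ y, pi y * (P ^ (t + 1)) y x :=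
        sum_le_sum_of_subset_of_nonneg (erase_subset _ _) fun y _ _ =>
          mul_nonneg (hpi.nonneg y) (pow_apply_nonneg hP _ y x)
    _ = pi x := congrFun (hpi.vecMul_pow (t + 1)) x

lemma noHit_sub_noHit_add_le (hP : P ∈ rowStochastic ℝ (Fin n))
    (hpi : IsStationaryDistribution P pi) (s m : ℕ) :
    noHit P x pi s - noHit P x pi (s + m) ≤ m * pi x := by
  rw [noHit_sub_noHit_add hP.2]
  calc _ ≤ ∑ _j ∈ range m, pi x := sum_le_sum fun j _ => firstHit_le hP.1 hpi _
    _ = m * pi x := by simp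

lemma one_sub_mul_le_noHit (hP : P ∈ rowStochastic ℝ (Fin n))
    (hpi : IsStationaryDistribution P pi) (t : ℕ) :
    1 - (t + 1) * pi x ≤ noHit P x pi t := by
  have h := noHit_sub_noHit_add_le (x := x) hP hpi 0 t
  rw [zero_add, noHit_zero hpi.sum_eq_one] at h
  linarith

end Stationary

section TimeShift

variable {n : ℕ} {P : Matrix (Fin n) (Fin n) ℝ} {x : Fin n} {pi : Fin n → ℝ} {T : ℕ} {p : ℝ}

lemma half_le_noHit (hP : P ∈ rowStochastic ℝ (Fin n)) (hpi : IsStationaryDistribution P pi)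
    (hT : 0 < T) (hp : ∀ v, (P ^ T) v x ≤ p) (hTp : 4 * T * p ≤ 1) {s : ℕ} (hs : s ≤ T) :
    1 / 2 ≤ noHit P x pi s := by
  have hS := one_sub_mul_le_noHit (x := x) hP hpi s
  have hpx := hpi.le_of_pow_apply_le hp
  have hsT : (s : ℝ) + 1 ≤ 2 * T := by exact_mod_cast (by omega : s + 1 ≤ 2 * T)
  nlinarith [hpi.nonneg x]

lemma one_sub_mul_noHit_le_noHit_add (hP : P ∈ rowStochastic ℝ (Fin n))
    (hpi : IsStationaryDistribution P pi) (hT : 0 < T) (hp : ∀ v, (P ^ T) v x ≤ p)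
    (hTp : 4 * T * p ≤ 1) (s : ℕ) :
    (1 - 2 * T * p) * noHit P x pi s ≤ noHit P x pi (s + T) := by
  have hTp0 : 0 ≤ (T : ℝ) * p :=
    mul_nonneg T.cast_nonneg ((hpi.nonneg x).trans (hpi.le_of_pow_apply_le hp))
  induction s using Nat.strong_induction_on with
  | _ s ih =>
    rcases le_or_gt s T with hs | hs
    · have hloss : noHit P x pi s - noHit P x pi (s + T) ≤ T * p :=
        (noHit_sub_noHit_add_le hP hpi s T).trans
          (mul_le_mul_of_nonneg_left (hpi.le_of_pow_apply_le hp) T.cast_nonneg)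
      nlinarith [mul_nonneg hTp0 (sub_nonneg.2 (half_le_noHit hP hpi hT hp hTp hs))]
    · obtain ⟨r, rfl⟩ : ∃ r, s = r + T := ⟨s - T, by omega⟩
      have hloss := noHit_add_sub_noHit_add_le hP hpi.nonneg hT hp r
      have hdouble : noHit P x pi r ≤ 2 * noHit P x pi (r + T) := by
        nlinarith [ih r (by omega), noHit_nonneg (x := x) hP.1 hpi.nonneg r]
      nlinarith [mul_le_mul_of_nonneg_left hdouble hTp0]

lemma noHit_pos (hP : P ∈ rowStochastic ℝ (Fin n)) (hpi : IsStationaryDistribution P pi)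
    (hT : 0 < T) (hp : ∀ v, (P ^ T) v x ≤ p) (hTp : 4 * T * p ≤ 1) (s : ℕ) :
    0 < noHit P x pi s := by
  induction s using Nat.strong_induction_on with
  | _ s ih =>
    rcases le_or_gt s T with hs | hs
    · linarith [half_le_noHit hP hpi hT hp hTp hs]
    · obtain ⟨r, rfl⟩ : ∃ r, s = r + T := ⟨s - T, by omega⟩
      nlinarith [one_sub_mul_noHit_le_noHit_add hP hpi hT hp hTp r, ih r (by omega)]

lemma abs_noHit_div_noHit_add_sub_one_le (hP : P ∈ rowStochastic ℝ (Fin n))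
    (hpi : IsStationaryDistribution P pi) (hT : 0 < T) (hp : ∀ v, (P ^ T) v x ≤ p)
    (hTp : 4 * T * p ≤ 1) (s : ℕ) :
    |noHit P x pi s / noHit P x pi (s + T) - 1| ≤ 4 * T * p := by
  have hpos := noHit_pos hP hpi hT hp hTp (s + T)
  have hanti := noHit_antitone (x := x) hP hpi.nonneg (Nat.le_add_right s T)
  have hshift := one_sub_mul_noHit_le_noHit_add hP hpi hT hp hTp s
  rw [abs_of_nonneg (by rw [sub_nonneg, one_le_div hpos]; exact hanti), sub_le_iff_le_add,
    div_le_iff₀ hpos]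
  nlinarith

end TimeShift

lemma abs_lt_of_rpow_mul_abs_lt_one {m c d q : ℝ} (hm : 1 ≤ m) (hc : 2 ≤ c)
    (hd : m ^ c * |d| < 1) (hq : 1 < m ^ 2 * q) : |d| < q := by
  have h2c : m ^ 2 ≤ m ^ c := by simpa using Real.rpow_le_rpow_of_exponent_le hm hc
  have : m ^ 2 * |d| < m ^ 2 * q := by nlinarith [abs_nonneg d]
  exact lt_of_mul_lt_mul_left this (by positivity)

theorem time_shift_insensitivity_general
    (P : (n : ℕ) → Matrix (Fin n) (Fin n) ℝ)
    (pi : (n : ℕ) → Fin n → ℝ)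
    (x : (n : ℕ) → Fin n)
    (T : ℕ → ℕ) (c : ℝ)
    (hc : 2 < c)
    (hT : Filter.Tendsto T Filter.atTop Filter.atTop)
    (hnn : ∀ n : ℕ, 2 ≤ n → ∀ y z : Fin n, 0 ≤ P n y z)
    (hrow : ∀ n : ℕ, 2 ≤ n → ∀ y : Fin n, ∑ z, P n y z = 1)
    (hpinn : ∀ n : ℕ, 2 ≤ n → ∀ y : Fin n, 0 ≤ pi n y)
    (hpisum : ∀ n : ℕ, 2 ≤ n → ∑ y, pi n y = 1)
    (hpistat : ∀ n : ℕ, 2 ≤ n → Matrix.vecMul (pi n) (P n) = pi n)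
    (HP1 : ∀ ε : ℝ, 0 < ε → ∃ N : ℕ, ∀ n : ℕ, N ≤ n → ∀ y z : Fin n,
      (n : ℝ) ^ c * |(P n ^ T n) y z - pi n z| < ε)
    (HP2 : ∀ ε : ℝ, 0 < ε → ∃ N : ℕ, ∀ n : ℕ, N ≤ n → ∀ y : Fin n,
      (T n : ℝ) * pi n y < ε)
    (HP3 : ∀ M : ℝ, ∃ N : ℕ, ∀ n : ℕ, N ≤ n → ∀ y : Fin n,
      M < (n : ℝ) ^ 2 * pi n y)
    :
    ∀ ε : ℝ, 0 < ε → ∃ N : ℕ, ∀ n : ℕ, N ≤ n → ∀ t : ℕ, T n < t →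
      |noHit (P n) (x n) (pi n) (t - T n) / noHit (P n) (x n) (pi n) t - 1| < ε := by
  intro ε hε
  refine eventually_atTop.1 ?_
  filter_upwards [eventually_ge_atTop 2, hT.eventually_ge_atTop 1,
    eventually_atTop.2 (HP1 1 one_pos), eventually_atTop.2 (HP2 (min ε 1 / 8) (by positivity)),
    eventually_atTop.2 (HP3 1)] with n hn hTn hmix hTpi hpi_large t ht
  have hP : P n ∈ rowStochastic ℝ (Fin n) := mem_rowStochastic_iff_sum.2 ⟨hnn n hn, hrow n hn⟩
  have hpi : IsStationaryDistribution (P n) (pi n) := ⟨hpinn n hn, hpisum n hn, hpistat n hn⟩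
  have hPT (v : Fin n) : (P n ^ T n) v (x n) ≤ 2 * pi n (x n) := by
    have h := abs_lt_of_rpow_mul_abs_lt_one (by exact_mod_cast (by omega : 1 ≤ n)) hc.le
      (hmix v (x n)) (hpi_large (x n))
    linarith [(abs_lt.1 h).2]
  have hsmall : 8 * T n * pi n (x n) < min ε 1 := by linarith [hTpi (x n)]
  obtain ⟨s, rfl⟩ : ∃ s, t = s + T n := ⟨t - T n, by omega⟩
  rw [Nat.add_sub_cancel]
  calc _ ≤ 4 * T n * (2 * pi n (x n)) :=
        abs_noHit_div_noHit_add_sub_one_le hP hpi (by omega) hPT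
          (by linarith [min_le_right ε 1]) s
    _ < ε := by linarith [min_le_left ε 1]

theorem time_shift_insensitivity
    (P : (n : ℕ) → Matrix (Fin n) (Fin n) ℝ)
    (pi : (n : ℕ) → Fin n → ℝ)
    (x : (n : ℕ) → Fin n)
    (T : ℕ → ℕ) (c : ℝ)
    (hc : 2 < c)
    (hT : Filter.Tendsto T Filter.atTop Filter.atTop)
    (hnn : ∀ n : ℕ, 2 ≤ n → ∀ y z : Fin n, 0 ≤ P n y z)
    (hrow : ∀ n : ℕ, 2 ≤ n → ∀ y : Fin n, ∑ z, P n y z = 1)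
    (hirr : ∀ n : ℕ, 2 ≤ n → ∀ y z : Fin n, ∃ t : ℕ, 0 < (P n ^ t) y z)
    (hpinn : ∀ n : ℕ, 2 ≤ n → ∀ y : Fin n, 0 ≤ pi n y)
    (hpisum : ∀ n : ℕ, 2 ≤ n → ∑ y, pi n y = 1)
    (hpistat : ∀ n : ℕ, 2 ≤ n → Matrix.vecMul (pi n) (P n) = pi n)
    (hpiuniq : ∀ n : ℕ, 2 ≤ n → ∀ rho : Fin n → ℝ, (∀ y, 0 ≤ rho y) →
      (∑ y, rho y = 1) → Matrix.vecMul rho (P n) = rho → rho = pi n)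
    (hkirr : ∀ n : ℕ, 2 ≤ n → ∀ y z : Fin n, y ≠ x n → z ≠ x n →
      ∃ t : ℕ, 0 < ((killed (P n) (x n)) ^ t) y z)
    (HP1 : ∀ ε : ℝ, 0 < ε → ∃ N : ℕ, ∀ n : ℕ, N ≤ n → ∀ y z : Fin n,
      (n : ℝ) ^ c * |(P n ^ T n) y z - pi n z| < ε)
    (HP2 : ∀ ε : ℝ, 0 < ε → ∃ N : ℕ, ∀ n : ℕ, N ≤ n → ∀ y : Fin n,
      (T n : ℝ) * pi n y < ε)
    (HP3 : ∀ M : ℝ, ∃ N : ℕ, ∀ n : ℕ, N ≤ n → ∀ y : Fin n,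
      M < (n : ℝ) ^ 2 * pi n y)
    :
    ∀ ε : ℝ, 0 < ε → ∃ N : ℕ, ∀ n : ℕ, N ≤ n → ∀ t : ℕ, T n < t →
      |noHit (P n) (x n) (pi n) (t - T n) / noHit (P n) (x n) (pi n) t - 1| < ε :=
  time_shift_insensitivity_general P pi x T c hc hT hnn hrow hpinn hpisum hpistat HP1 HP2 HP3
end

section
/- Evolution of the quasi-stationary distribution under the full chain: for every T ∈ ℕ and every y ≠ x, (μ⋆ P^T)(y) ≤ λ^T μ⋆(y) + (1 − λ) Σ_{s=0}^{T−1} P^s(x,y), where μ⋆ is extended to a probability vector on X by setting μ⋆(x) = 0 and μ⋆ P^T denotes the left action of the T-th matrix power of P. -/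
/-!
One step of the full chain started from the quasi-stationary distribution keeps the surviving
mass `λ` distributed as `μ⋆` and puts the killed mass `1 - λ` at `x`:
`μ⋆ P = λ μ⋆ + (1 - λ) δ_x`. Iterating gives the exact formula
`μ⋆ P^T = λ^T μ⋆ + (1 - λ) ∑_{s<T} λ^(T-1-s) P^s(x, ·)`, and the bound follows from
`λ^(T-1-s) ≤ 1` and the nonnegativity of `P^s`.
-/

open Finset Filter

namespace Matrix

variable {n R : Type*} [Fintype n]

theorem sum_vecMul_eq_sum_of_sum_row_eq_one [Semiring R]
    {P : Matrix n n R} (hrow : ∀ i, ∑ j, P i j = 1) (v : n → R) :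
    ∑ j, (v ᵥ* P) j = ∑ i, v i := by
  have hP : P *ᵥ 1 = 1 := funext fun i => by simp [mulVec, dotProduct, hrow]
  rw [← dotProduct_one, ← dotProduct_mulVec, hP, dotProduct_one]

theorem vecMul_pow_eq_of_vecMul_eq_smul_add_single [DecidableEq n] [CommSemiring R]
    {P : Matrix n n R} {v : n → R} {x : n} {a c : R} (hv : v ᵥ* P = a • v + Pi.single x c) (T : ℕ) :
    v ᵥ* P ^ T = a ^ T • v + c • ∑ s ∈ range T, a ^ (T - 1 - s) • (P ^ s) x := by
  induction T with
  | zero => simp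
  | succ T ih =>
    have hpow_row : ∀ s, (P ^ s) x ᵥ* P = (P ^ (s + 1)) x := fun s => by
      rw [pow_succ, mul_apply_eq_vecMul]
    have hsingle : Pi.single x c = c • (P ^ 0) x := by
      ext y; simp [one_apply, Pi.single_apply, eq_comm]
    rw [pow_succ, ← vecMul_vecMul, ih, add_vecMul, smul_vecMul, smul_vecMul, sum_vecMul, hv,
      sum_range_succ', hsingle]
    simp only [smul_vecMul, hpow_row, Nat.add_sub_cancel, Nat.sub_zero, Nat.sub_sub, Nat.add_comm 1]
    module

theorem vecMul_pow_apply_le_of_vecMul_eq_smul_add_single [DecidableEq n] [CommSemiring R]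
    [PartialOrder R] [IsOrderedRing R] {P : Matrix n n R} (hP : ∀ i j, 0 ≤ P i j) {v : n → R}
    {x : n} {a c : R} (hv : v ᵥ* P = a • v + Pi.single x c) (ha₀ : 0 ≤ a) (ha₁ : a ≤ 1)
    (hc : 0 ≤ c) (T : ℕ) (y : n) :
    (v ᵥ* P ^ T) y ≤ a ^ T * v y + c * ∑ s ∈ range T, (P ^ s) x y := by
  rw [vecMul_pow_eq_of_vecMul_eq_smul_add_single hv T]
  simp only [Pi.add_apply, Pi.smul_apply, smul_eq_mul, Finset.sum_apply]
  gcongr with s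
  exact mul_le_of_le_one_left (pow_apply_nonneg hP s x y) (pow_le_one₀ ha₀ ha₁)

end Matrix

theorem Function.eq_of_sum_eq_of_forall_ne {ι M : Type*} [Fintype ι] [DecidableEq ι]
    [AddCancelCommMonoid M] {f g : ι → M} (x : ι) (hne : ∀ y ≠ x, f y = g y)
    (hsum : ∑ y, f y = ∑ y, g y) : f = g := by
  funext y
  by_cases hy : y = x
  · subst hy
    rw [← add_sum_erase univ f (mem_univ y), ← add_sum_erase univ g (mem_univ y),
      sum_congr rfl fun z hz => hne z (ne_of_mem_erase hz)] at hsum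
    exact add_right_cancel hsum
  · exact hne y hy

open Matrix

theorem vecMul_killed_apply_of_ne {n : ℕ} (P : Matrix (Fin n) (Fin n) ℝ) {x y : Fin n}
    {v : Fin n → ℝ} (hvx : v x = 0) (hy : y ≠ x) : (v ᵥ* killed P x) y = (v ᵥ* P) y := by
  simp only [vecMul, dotProduct]
  refine sum_congr rfl fun z _ => ?_
  by_cases hz : z = x
  · simp [hz, hvx]
  · simp [killed, hz, hy]

theorem vecMul_eq_smul_add_single_of_quasiStationary {n : ℕ} {P : Matrix (Fin n) (Fin n) ℝ}
    {x : Fin n} (hrow : ∀ y, ∑ z, P y z = 1) {lam : ℝ} {mu : Fin n → ℝ} (hmux : mu x = 0)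
    (hmusum : ∑ y, mu y = 1) (hmuqs : mu ᵥ* killed P x = lam • mu) :
    mu ᵥ* P = lam • mu + Pi.single x (1 - lam) := by
  refine Function.eq_of_sum_eq_of_forall_ne x (fun y hy => ?_) ?_
  · rw [← vecMul_killed_apply_of_ne P hmux hy, hmuqs]
    simp [hy]
  · simp [sum_vecMul_eq_sum_of_sum_row_eq_one hrow, sum_add_distrib, ← mul_sum, hmusum]

theorem qsd_evolution_upper_bound_general
    {m : ℕ} (P : Matrix (Fin m) (Fin m) ℝ) (x : Fin m)
    (hnn : ∀ y z : Fin m, 0 ≤ P y z)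
    (hrow : ∀ y : Fin m, ∑ z, P y z = 1)
    (lam : ℝ) (hlam : lam ∈ Set.Ioo (0 : ℝ) 1)
    (mu : Fin m → ℝ)
    (hmux : mu x = 0) (hmusum : ∑ y, mu y = 1)
    (hmuqs : Matrix.vecMul mu (killed P x) = lam • mu)
    :
    ∀ T : ℕ, ∀ y : Fin m, y ≠ x →
      Matrix.vecMul mu (P ^ T) y ≤
        lam ^ T * mu y + (1 - lam) * ∑ s ∈ Finset.range T, (P ^ s) x y := by
  intro T y _
  exact vecMul_pow_apply_le_of_vecMul_eq_smul_add_single hnn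
    (vecMul_eq_smul_add_single_of_quasiStationary hrow hmux hmusum hmuqs) hlam.1.le hlam.2.le
    (sub_nonneg.2 hlam.2.le) T y

theorem qsd_evolution_upper_bound
    {m : ℕ} (P : Matrix (Fin m) (Fin m) ℝ) (x : Fin m)
    (hnn : ∀ y z : Fin m, 0 ≤ P y z)
    (hrow : ∀ y : Fin m, ∑ z, P y z = 1)
    (hirr : ∀ y z : Fin m, ∃ t : ℕ, 0 < (P ^ t) y z)
    (hkirr : ∀ y z : Fin m, y ≠ x → z ≠ x → ∃ t : ℕ, 0 < ((killed P x) ^ t) y z)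
    (lam : ℝ) (hlam : lam ∈ Set.Ioo (0 : ℝ) 1)
    (mu : Fin m → ℝ)
    (hmunn : ∀ y, 0 ≤ mu y) (hmux : mu x = 0) (hmusum : ∑ y, mu y = 1)
    (hmuqs : Matrix.vecMul mu (killed P x) = lam • mu)
    :
    ∀ T : ℕ, ∀ y : Fin m, y ≠ x →
      Matrix.vecMul mu (P ^ T) y ≤
        lam ^ T * mu y + (1 - lam) * ∑ s ∈ Finset.range T, (P ^ s) x y :=
  qsd_evolution_upper_bound_general P x hnn hrow lam hlam mu hmux hmusum hmuqs
end
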